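/- arXiv:2310.08919 — 8 statements merged into one kernel-verified Lean document; each statement's English description precedes it below -/
import Mathlib

section
/- Fix two distinct points Q and Q' in the Euclidean plane ℝ², a vector v that is linearly independent from Q' − Q, and a real number ν > 0. Every point P of the plane can be written uniquely as P = Q + s·(Q' − Q) + t·v with s, t ∈ ℝ; set V = Q + s·(Q' − Q). Then the locus L = {P ∈ ℝ² : t²·‖v‖² = ν·s·(s − 1)·‖Q' − Q‖²} (which encodes Budden's relation PV² = ν·VQ·VQ' with signed lengths along the line QQ') is the image of the standard hyperbola {(x, y) ∈ ℝ² : x² − y² = 1} under an invertible affine transformation of ℝ². -/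
/-!
In the oblique coordinates `(s, t)` Budden's relation reads `(2s - 1)² - (t / c)² = 1` with
`c = ‖Q' - Q‖ √ν / (2 ‖v‖)`. So the affine chart `p ↦ M + p 0 • (Q' - Q) / 2 + p 1 • c v`,
centred at the midpoint `M` of `QQ'`, carries the standard hyperbola onto the locus.
-/

open Module

section PairCoordinates

variable {E : Type*} [AddCommGroup E] [Module ℝ E]

noncomputable def Module.Basis.pairAffineEquiv (b : Basis (Fin 2) ℝ E) (O : E) :
    EuclideanSpace ℝ (Fin 2) ≃ᵃ[ℝ] E :=
  ((EuclideanSpace.equiv (Fin 2) ℝ).toLinearEquiv.trans b.equivFun.symm).toAffineEquiv.trans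
    (AffineEquiv.constVAdd ℝ E O)

theorem Module.Basis.pairAffineEquiv_apply (b : Basis (Fin 2) ℝ E) (O : E)
    (p : EuclideanSpace ℝ (Fin 2)) : b.pairAffineEquiv O p = O + p 0 • b 0 + p 1 • b 1 := by
  simp [pairAffineEquiv, Basis.equivFun_symm_apply, Fin.sum_univ_two, add_assoc]

theorem Module.Basis.pairAffineEquiv_image_setOf (b : Basis (Fin 2) ℝ E) (O : E)
    (R : ℝ → ℝ → Prop) :
    b.pairAffineEquiv O '' {p | R (p 0) (p 1)} =
      {P | ∃ x y : ℝ, P = O + x • b 0 + y • b 1 ∧ R x y} := by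
  ext P
  constructor
  · rintro ⟨p, hp, rfl⟩
    exact ⟨p 0, p 1, b.pairAffineEquiv_apply O p, hp⟩
  · rintro ⟨x, y, rfl, hxy⟩
    exact ⟨!₂[x, y], hxy, by simp [b.pairAffineEquiv_apply]⟩

theorem exists_add_smul_add_smul_iff_rescale (Q u v P : E) {c : ℝ} (hc : c ≠ 0)
    (R : ℝ → ℝ → Prop) :
    (∃ s t : ℝ, P = Q + s • u + t • v ∧ R s t) ↔
      ∃ x y : ℝ, P = (Q + (1 / 2 : ℝ) • u) + x • ((1 / 2 : ℝ) • u) + y • (c • v) ∧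
        R ((x + 1) / 2) (c * y) := by
  constructor
  · rintro ⟨s, t, rfl, hst⟩
    refine ⟨2 * s - 1, t / c, ?_, ?_⟩
    · rw [smul_smul, smul_smul, div_mul_cancel₀ t hc]
      match_scalars <;> ring
    · rwa [show (2 * s - 1 + 1) / 2 = s by ring, mul_div_cancel₀ t hc]
  · rintro ⟨x, y, rfl, hxy⟩
    exact ⟨(x + 1) / 2, c * y, by match_scalars <;> ring, hxy⟩

end PairCoordinates

theorem budden_relation_iff {a b ν c : ℝ} (hνa : ν * a ^ 2 ≠ 0)
    (hc : c ^ 2 * (4 * b ^ 2) = ν * a ^ 2) (x y : ℝ) :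
    (c * y) ^ 2 * b ^ 2 = ν * ((x + 1) / 2) * ((x + 1) / 2 - 1) * a ^ 2 ↔ x ^ 2 - y ^ 2 = 1 := by
  have key : 4 * ((c * y) ^ 2 * b ^ 2 - ν * ((x + 1) / 2) * ((x + 1) / 2 - 1) * a ^ 2) =
      ν * a ^ 2 * (1 - (x ^ 2 - y ^ 2)) := by
    linear_combination y ^ 2 * hc
  constructor
  · intro h
    refine mul_left_cancel₀ hνa (?_ : ν * a ^ 2 * (x ^ 2 - y ^ 2) = ν * a ^ 2 * 1)
    linear_combination key - 4 * h
  · intro h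
    linear_combination (key - ν * a ^ 2 * h) / 4

theorem budden_locus_is_hyperbola_general
    (Q Q' v : EuclideanSpace ℝ (Fin 2))
    (hindep : LinearIndependent ℝ ![Q' - Q, v])
    (ν : ℝ) (hν : 0 < ν)
    (L : Set (EuclideanSpace ℝ (Fin 2)))
    (hL : L = {P : EuclideanSpace ℝ (Fin 2) | ∃ s t : ℝ,
      P = Q + s • (Q' - Q) + t • v ∧
      t ^ 2 * ‖v‖ ^ 2 = ν * s * (s - 1) * ‖Q' - Q‖ ^ 2}) :
    ∃ A : EuclideanSpace ℝ (Fin 2) ≃ᵃ[ℝ] EuclideanSpace ℝ (Fin 2),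
      L = A '' {p : EuclideanSpace ℝ (Fin 2) | (p 0) ^ 2 - (p 1) ^ 2 = 1} := by
  subst hL
  have hu : 0 < ‖Q' - Q‖ := norm_pos_iff.mpr (by simpa using hindep.ne_zero 0)
  have hv : 0 < ‖v‖ := norm_pos_iff.mpr (by simpa using hindep.ne_zero 1)
  set c := √(ν * ‖Q' - Q‖ ^ 2 / (4 * ‖v‖ ^ 2))
  have hc0 : c ≠ 0 := by positivity
  have hc : c ^ 2 * (4 * ‖v‖ ^ 2) = ν * ‖Q' - Q‖ ^ 2 := by
    rw [Real.sq_sqrt (by positivity)]; field_simp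
  let b : Basis (Fin 2) ℝ (EuclideanSpace ℝ (Fin 2)) :=
    (basisOfLinearIndependentOfCardEqFinrank hindep (by simp)).isUnitSMul (w := ![1 / 2, c])
      (by simp [Fin.forall_fin_two, hc0])
  refine ⟨b.pairAffineEquiv (Q + (1 / 2 : ℝ) • (Q' - Q)),
    .trans ?_ (b.pairAffineEquiv_image_setOf _ fun x y => x ^ 2 - y ^ 2 = 1).symm⟩
  ext P
  refine (exists_add_smul_add_smul_iff_rescale Q (Q' - Q) v P hc0 _).trans ?_
  simp [b, Basis.isUnitSMul_apply, budden_relation_iff (by positivity) hc]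

/-- **Budden's relation, hyperbola case.**
Fix distinct points `Q, Q'` in the Euclidean plane, a vector `v` linearly independent
from `Q' - Q`, and `ν > 0`.  The locus of points `P = Q + s • (Q' - Q) + t • v` with
`t² ‖v‖² = ν s (s - 1) ‖Q' - Q‖²` (Budden's relation `PV² = ν · VQ · VQ'` in signed
lengths) is the image of the standard hyperbola `x² - y² = 1` under an invertible
affine transformation of the plane. -/
theorem budden_locus_is_hyperbola
    (Q Q' v : EuclideanSpace ℝ (Fin 2)) (hQQ' : Q ≠ Q')
    (hindep : LinearIndependent ℝ ![Q' - Q, v])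
    (ν : ℝ) (hν : 0 < ν)
    (L : Set (EuclideanSpace ℝ (Fin 2)))
    (hL : L = {P : EuclideanSpace ℝ (Fin 2) | ∃ s t : ℝ,
      P = Q + s • (Q' - Q) + t • v ∧
      t ^ 2 * ‖v‖ ^ 2 = ν * s * (s - 1) * ‖Q' - Q‖ ^ 2}) :
    ∃ A : EuclideanSpace ℝ (Fin 2) ≃ᵃ[ℝ] EuclideanSpace ℝ (Fin 2),
      L = A '' {p : EuclideanSpace ℝ (Fin 2) | (p 0) ^ 2 - (p 1) ^ 2 = 1} :=
  budden_locus_is_hyperbola_general Q Q' v hindep ν hν L hL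
end

section
/- Fix two distinct points Q and Q' in the Euclidean plane ℝ², a vector v that is linearly independent from Q' − Q, and a real number ν < 0. Every point P of the plane can be written uniquely as P = Q + s·(Q' − Q) + t·v with s, t ∈ ℝ. Then the locus L = {P ∈ ℝ² : t²·‖v‖² = ν·s·(s − 1)·‖Q' − Q‖²} is the image of the unit circle {(x, y) ∈ ℝ² : x² + y² = 1} under an invertible affine transformation of ℝ². -/
/-!
Substituting `s = (1 + x) / 2` and `t = c * y` with `c² · 4‖v‖² = -ν‖Q' - Q‖²` turns Budden's
relation into `x² + y² = 1`. So the locus is the ellipse centred at the midpoint of `QQ'` with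
conjugate semi-diameters `(Q' - Q) / 2` and `c • v`, i.e. the image of the unit circle under the
affine chart with that origin and those basis vectors.
-/

variable {M : Type*} [AddCommGroup M] [Module ℝ M]

namespace Module.Basis

noncomputable def planeChart (b : Basis (Fin 2) ℝ M) (o : M) :
    EuclideanSpace ℝ (Fin 2) ≃ᵃ[ℝ] M :=
  ((WithLp.linearEquiv 2 ℝ (Fin 2 → ℝ)).trans b.equivFun.symm).toAffineEquiv.trans
    (AffineEquiv.constVAdd ℝ M o)

theorem planeChart_apply (b : Basis (Fin 2) ℝ M) (o : M) (p : EuclideanSpace ℝ (Fin 2)) :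
    b.planeChart o p = o + p 0 • b 0 + p 1 • b 1 := by
  simp [planeChart, equivFun_symm_apply, Fin.sum_univ_two, add_assoc]

theorem planeChart_image_unitCircle (b : Basis (Fin 2) ℝ M) (o : M) :
    b.planeChart o '' {p | p 0 ^ 2 + p 1 ^ 2 = 1} =
      {P | ∃ x y : ℝ, P = o + x • b 0 + y • b 1 ∧ x ^ 2 + y ^ 2 = 1} := by
  ext P
  constructor
  · rintro ⟨p, hp, rfl⟩
    exact ⟨p 0, p 1, planeChart_apply b o p, hp⟩
  · rintro ⟨x, y, rfl, hxy⟩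
    exact ⟨!₂[x, y], hxy, by simp [planeChart_apply]⟩

end Module.Basis

theorem exists_ne_zero_sq_mul_four_mul_eq {a b : ℝ} (ha : 0 < a) (hb : 0 < b) :
    ∃ c : ℝ, c ≠ 0 ∧ c ^ 2 * (4 * a) = b :=
  ⟨√(b / (4 * a)), by positivity, by rw [Real.sq_sqrt (by positivity)]; field_simp⟩

theorem budden_relation_iff_circle {a b c ν s t : ℝ} (ha : a ≠ 0) (hc0 : c ≠ 0)
    (hc : c ^ 2 * (4 * a) = -ν * b) :
    t ^ 2 * a = ν * s * (s - 1) * b ↔ (2 * s - 1) ^ 2 + (t / c) ^ 2 = 1 := by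
  have key : t ^ 2 * a - ν * s * (s - 1) * b =
      c ^ 2 * a * ((2 * s - 1) ^ 2 + (t / c) ^ 2 - 1) := by
    field_simp
    linear_combination (s * (1 - s)) * hc
  rw [← sub_eq_zero, key, mul_eq_zero, sub_eq_zero]
  simp [ha, hc0]

theorem budden_locus_eq_conjugate_diameters {Q d v : M} {a b c ν : ℝ} (ha : a ≠ 0) (hc0 : c ≠ 0)
    (hc : c ^ 2 * (4 * a) = -ν * b) :
    {P : M | ∃ s t : ℝ, P = Q + s • d + t • v ∧ t ^ 2 * a = ν * s * (s - 1) * b} =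
      {P | ∃ x y : ℝ, P = (Q + (2⁻¹ : ℝ) • d) + x • ((2⁻¹ : ℝ) • d) + y • (c • v) ∧
        x ^ 2 + y ^ 2 = 1} := by
  ext P
  constructor
  · rintro ⟨s, t, rfl, hst⟩
    refine ⟨2 * s - 1, t / c, ?_, (budden_relation_iff_circle ha hc0 hc).1 hst⟩
    match_scalars
    · ring
    · ring
    · field_simp
  · rintro ⟨x, y, rfl, hxy⟩
    refine ⟨(x + 1) / 2, c * y, by module, (budden_relation_iff_circle ha hc0 hc).2 ?_⟩
    rw [mul_div_cancel_left₀ y hc0]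
    linear_combination hxy

theorem budden_locus_is_ellipse_general
    (Q Q' v : EuclideanSpace ℝ (Fin 2))
    (hindep : LinearIndependent ℝ ![Q' - Q, v])
    (ν : ℝ) (hν : ν < 0)
    (L : Set (EuclideanSpace ℝ (Fin 2)))
    (hL : L = {P : EuclideanSpace ℝ (Fin 2) | ∃ s t : ℝ,
      P = Q + s • (Q' - Q) + t • v ∧
      t ^ 2 * ‖v‖ ^ 2 = ν * s * (s - 1) * ‖Q' - Q‖ ^ 2}) :
    ∃ A : EuclideanSpace ℝ (Fin 2) ≃ᵃ[ℝ] EuclideanSpace ℝ (Fin 2),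
      L = A '' {p : EuclideanSpace ℝ (Fin 2) | (p 0) ^ 2 + (p 1) ^ 2 = 1} := by
  have hd : 0 < ‖Q' - Q‖ := norm_pos_iff.2 (by simpa using hindep.ne_zero 0)
  have hv : 0 < ‖v‖ := norm_pos_iff.2 (by simpa using hindep.ne_zero 1)
  obtain ⟨c, hc0, hc⟩ := exists_ne_zero_sq_mul_four_mul_eq (a := ‖v‖ ^ 2)
    (b := -ν * ‖Q' - Q‖ ^ 2) (by positivity) (mul_pos (neg_pos.2 hν) (by positivity))
  let b := (basisOfLinearIndependentOfCardEqFinrank hindep (by simp)).isUnitSMul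
    (w := ![2⁻¹, c]) (by simp [Fin.forall_fin_two, hc0])
  refine ⟨b.planeChart (Q + (2⁻¹ : ℝ) • (Q' - Q)), ?_⟩
  rw [hL, budden_locus_eq_conjugate_diameters (by positivity) hc0 hc,
    b.planeChart_image_unitCircle]
  simp [b, Module.Basis.isUnitSMul_apply]

/-- **Budden's relation, ellipse case.**
Fix distinct points `Q, Q'` in the Euclidean plane, a vector `v` linearly independent
from `Q' - Q`, and `ν < 0`.  The locus of points `P = Q + s • (Q' - Q) + t • v` with
`t² ‖v‖² = ν s (s - 1) ‖Q' - Q‖²` is the image of the unit circle `x² + y² = 1`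
under an invertible affine transformation of the plane. -/
theorem budden_locus_is_ellipse
    (Q Q' v : EuclideanSpace ℝ (Fin 2)) (hQQ' : Q ≠ Q')
    (hindep : LinearIndependent ℝ ![Q' - Q, v])
    (ν : ℝ) (hν : ν < 0)
    (L : Set (EuclideanSpace ℝ (Fin 2)))
    (hL : L = {P : EuclideanSpace ℝ (Fin 2) | ∃ s t : ℝ,
      P = Q + s • (Q' - Q) + t • v ∧
      t ^ 2 * ‖v‖ ^ 2 = ν * s * (s - 1) * ‖Q' - Q‖ ^ 2}) :
    ∃ A : EuclideanSpace ℝ (Fin 2) ≃ᵃ[ℝ] EuclideanSpace ℝ (Fin 2),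
      L = A '' {p : EuclideanSpace ℝ (Fin 2) | (p 0) ^ 2 + (p 1) ^ 2 = 1} :=
  budden_locus_is_ellipse_general Q Q' v hindep ν hν L hL
end

section
/- Let T : ℝ² → ℝ² be an invertible linear map, let E = T''{(x,y) : x² + y² = 1} be the ellipse that is the image of the unit circle under T, and set Q = T(1,0), R = T(0,1), Q' = −Q (so OQ and OR are conjugate semi-diameters of E, where O is the origin). For every point P ∈ E there is a unique point V on the line ℝ·Q such that P − V is a scalar multiple of R, and this V satisfies ‖P − V‖² = (‖R‖² / ‖Q‖²) · ‖V − Q‖ · ‖V − Q'‖. -/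
/-!
Writing `P = T p = c • Q + s • R` with `c = p 0`, `s = p 1`, linear independence of `Q` and `R`
forces `V = c • Q` and `P - V = s • R`. Then `V - Q = (c - 1) • Q` and `V - Q' = (c + 1) • Q`, so
`‖V - Q‖ * ‖V - Q'‖ = |1 - c ^ 2| * ‖Q‖ ^ 2 = s ^ 2 * ‖Q‖ ^ 2`, while `‖P - V‖ ^ 2 = s ^ 2 * ‖R‖ ^ 2`.
-/

section LinearIndependentPair

variable {K M : Type*} [Ring K] [AddCommGroup M] [Module K M]

theorem LinearIndependent.exists_eq_smul_and_exists_sub_eq_smul_iff {Q R P V : M}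
    (hQR : LinearIndependent K ![Q, R]) {c s : K} (hP : P = c • Q + s • R) :
    ((∃ a : K, V = a • Q) ∧ (∃ b : K, P - V = b • R)) ↔ V = c • Q := by
  constructor
  · rintro ⟨⟨a, rfl⟩, b, hb⟩
    have hab : a • Q + b • R = c • Q + s • R := by rw [← hb, ← hP, add_sub_cancel]
    rw [(hQR.eq_of_pair hab).1]
  · rintro rfl
    exact ⟨⟨c, rfl⟩, s, by rw [hP, add_sub_cancel_left]⟩

end LinearIndependentPair

section NormedSpace

variable {E : Type*} [NormedAddCommGroup E] [NormedSpace ℝ E]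

theorem norm_smul_sub_self_mul_norm_smul_add_self (Q : E) (c : ℝ) :
    ‖c • Q - Q‖ * ‖c • Q + Q‖ = |1 - c ^ 2| * ‖Q‖ ^ 2 := by
  have hsub : c • Q - Q = (c - 1) • Q := by rw [sub_smul, one_smul]
  have hadd : c • Q + Q = (c + 1) • Q := by rw [add_smul, one_smul]
  rw [hsub, hadd, norm_smul, norm_smul, Real.norm_eq_abs, Real.norm_eq_abs,
    show 1 - c ^ 2 = -((c - 1) * (c + 1)) by ring, abs_neg, abs_mul]
  ring

theorem norm_smul_sq_eq_div_mul_norm_sub_mul_norm_sub_neg {Q : E} (R : E) (hQ : Q ≠ 0)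
    {c s : ℝ} (hcs : c ^ 2 + s ^ 2 = 1) :
    ‖s • R‖ ^ 2 = ‖R‖ ^ 2 / ‖Q‖ ^ 2 * (‖c • Q - Q‖ * ‖c • Q - -Q‖) := by
  rw [sub_neg_eq_add, norm_smul_sub_self_mul_norm_smul_add_self,
    show 1 - c ^ 2 = s ^ 2 by linarith, abs_of_nonneg (sq_nonneg s), norm_smul, mul_pow,
    Real.norm_eq_abs, sq_abs]
  field_simp

end NormedSpace

theorem EuclideanSpace.linearIndependent_single_one_pair :
    LinearIndependent ℝ ![EuclideanSpace.single (0 : Fin 2) (1 : ℝ), EuclideanSpace.single 1 1] := by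
  refine LinearIndependent.pair_iff.2 fun s t hst ↦ ⟨?_, ?_⟩
  · simpa using congrArg (· 0) hst
  · simpa using congrArg (· 1) hst

theorem EuclideanSpace.eq_smul_single_zero_add_smul_single_one (p : EuclideanSpace ℝ (Fin 2)) :
    p = p 0 • EuclideanSpace.single 0 1 + p 1 • EuclideanSpace.single 1 1 := by
  ext i
  fin_cases i <;> simp

/-- **Budden's relation for conjugate semi-diameters of an ellipse.**
Let `E` be the image of the unit circle under an invertible linear map `T`,
`Q = T (1,0)`, `R = T (0,1)`, `Q' = -Q` (a pair of conjugate semi-diameters).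
For every `P ∈ E` there is a unique `V` on the line `ℝ • Q` with `P - V` a multiple
of `R`, and any such `V` satisfies `‖P - V‖² = (‖R‖²/‖Q‖²) · ‖V - Q‖ · ‖V - Q'‖`. -/
theorem ellipse_conjugate_diameter_relation
    (T : EuclideanSpace ℝ (Fin 2) ≃ₗ[ℝ] EuclideanSpace ℝ (Fin 2))
    (E : Set (EuclideanSpace ℝ (Fin 2)))
    (hE : E = T '' {p : EuclideanSpace ℝ (Fin 2) | (p 0) ^ 2 + (p 1) ^ 2 = 1})
    (Q R Q' : EuclideanSpace ℝ (Fin 2))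
    (hQ : Q = T (EuclideanSpace.single (0 : Fin 2) (1 : ℝ))) (hR : R = T (EuclideanSpace.single (1 : Fin 2) (1 : ℝ))) (hQ' : Q' = -Q) :
    ∀ P ∈ E,
      (∃! V : EuclideanSpace ℝ (Fin 2),
        (∃ a : ℝ, V = a • Q) ∧ (∃ b : ℝ, P - V = b • R)) ∧
      ∀ V : EuclideanSpace ℝ (Fin 2),
        ((∃ a : ℝ, V = a • Q) ∧ (∃ b : ℝ, P - V = b • R)) →
          ‖P - V‖ ^ 2 = ‖R‖ ^ 2 / ‖Q‖ ^ 2 * (‖V - Q‖ * ‖V - Q'‖) := by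
  subst hE
  rintro _ ⟨p, hp, rfl⟩
  have hTp : T p = p 0 • Q + p 1 • R := by
    conv_lhs => rw [EuclideanSpace.eq_smul_single_zero_add_smul_single_one p]
    rw [map_add, map_smul, map_smul, hQ, hR]
  have hQR : LinearIndependent ℝ ![Q, R] := by
    subst hQ hR
    change LinearIndependent ℝ (FinVec.map T ![_, _])
    rw [FinVec.map_eq]
    exact EuclideanSpace.linearIndependent_single_one_pair.map' T.toLinearMap T.ker
  have hV := fun V ↦ hQR.exists_eq_smul_and_exists_sub_eq_smul_iff (V := V) hTp
  refine ⟨⟨p 0 • Q, (hV _).2 rfl, fun V h ↦ (hV V).1 h⟩, fun V h ↦ ?_⟩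
  rw [(hV V).1 h, hTp, add_sub_cancel_left, hQ']
  exact norm_smul_sq_eq_div_mul_norm_sub_mul_norm_sub_neg R (hQR.ne_zero 0) hp
end

section
/- Let A₁, A₂, A₃, A₄, A₅, A₆ be six distinct points lying on a circle in the Euclidean plane ℝ². Suppose the lines A₁A₂ and A₄A₅ meet in exactly one point P₁, the lines A₂A₃ and A₅A₆ meet in exactly one point P₂, and the lines A₃A₄ and A₆A₁ meet in exactly one point P₃. Then P₁, P₂ and P₃ are collinear. -/
/-!
Move the circle to the unit circle of `ℂ` by an injective affine map. There the chord through
`a` and `b` is the line `z + a b z̄ = a + b`, so each intersection point `p` of two opposite sides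
and its conjugate `p̄` solve a pair of linear equations with coefficients in the vertices. Three
points `p₁, p₂, p₃` are collinear exactly when `(p₂ - p₁)(p̄₃ - p̄₁)` is real, and after
substituting the solved values this becomes a polynomial identity in the six vertices.
-/

open ComplexConjugate

theorem AffineMap.collinear_map_iff {k V₁ P₁ V₂ P₂ : Type*} [DivisionRing k] [AddCommGroup V₁]
    [Module k V₁] [AddTorsor V₁ P₁] [AddCommGroup V₂] [Module k V₂] [AddTorsor V₂ P₂]
    (f : P₁ →ᵃ[k] P₂) (hf : Function.Injective f) {p₁ p₂ p₃ : P₁} :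
    Collinear k ({f p₁, f p₂, f p₃} : Set P₂) ↔ Collinear k ({p₁, p₂, p₃} : Set P₁) := by
  rw [collinear_iff_not_affineIndependent_set, collinear_iff_not_affineIndependent_set,
    ← f.affineIndependent_iff hf, ← FinVec.map_eq]
  rfl

theorem AffineMap.mem_affineSpan_pair_map {k V₁ P₁ V₂ P₂ : Type*} [Ring k] [AddCommGroup V₁]
    [Module k V₁] [AddTorsor V₁ P₁] [AddCommGroup V₂] [Module k V₂] [AddTorsor V₂ P₂]
    (f : P₁ →ᵃ[k] P₂) {p p₁ p₂ : P₁} (hp : p ∈ line[k, p₁, p₂]) : f p ∈ line[k, f p₁, f p₂] := by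
  rw [← Set.image_pair, ← AffineSubspace.map_span]
  exact AffineSubspace.mem_map_of_mem f hp

theorem exists_injective_affineMap_complex_norm_eq_one {V P : Type*} [NormedAddCommGroup V]
    [InnerProductSpace ℝ V] [MetricSpace P] [NormedAddTorsor V P] (hV : Module.finrank ℝ V = 2)
    (O : P) {r : ℝ} (hr : 0 < r) :
    ∃ f : P →ᵃ[ℝ] ℂ, Function.Injective f ∧ ∀ A, dist A O = r → ‖f A‖ = 1 := by
  have : FiniteDimensional ℝ V := Module.finite_of_finrank_eq_succ hV
  let e : V ≃ₗᵢ[ℝ] ℂ :=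
    (Complex.isometryOfOrthonormal ((stdOrthonormalBasis ℝ V).reindex (finCongr hV))).symm
  let f : P →ᵃ[ℝ] ℂ :=
    (r⁻¹ • e.toLinearMap).toAffineMap.comp (AffineEquiv.vaddConst ℝ O).symm.toAffineMap
  have hf : ∀ A, f A = r⁻¹ • e (A -ᵥ O) := fun _ => rfl
  refine ⟨f, fun A B hAB => ?_, fun A hA => ?_⟩
  · rw [hf, hf, smul_right_inj (inv_ne_zero hr.ne')] at hAB
    exact vsub_left_cancel (e.injective hAB)
  · rw [hf, norm_smul, e.norm_map, ← dist_eq_norm_vsub, hA, norm_inv, Real.norm_of_nonneg hr.le,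
      inv_mul_cancel₀ hr.ne']

section ChordIntersection

variable {K : Type*} [Field K] {a b c d z w : K}

/-- If `ab = cd`, the two equations force `a + b = c + d`, so `{a, b}` and `{c, d}` are the roots
of the same quadratic. -/
theorem mul_sub_mul_ne_zero_of_chords (hca : c ≠ a) (hcb : c ≠ b)
    (h₁ : z + a * b * w = a + b) (h₂ : z + c * d * w = c + d) : a * b - c * d ≠ 0 := by
  intro h
  have hsum : a + b - (c + d) = 0 := by linear_combination w * h - h₁ + h₂
  have hc : (c - a) * (c - b) = 0 := by linear_combination (-c) * hsum + h
  rcases mul_eq_zero.1 hc with hc | hc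
  · exact hca (sub_eq_zero.1 hc)
  · exact hcb (sub_eq_zero.1 hc)

variable (hca : c ≠ a) (hcb : c ≠ b) (h₁ : z + a * b * w = a + b) (h₂ : z + c * d * w = c + d)
include hca hcb h₁ h₂

theorem eq_div_of_chords_left : z = (a * b * (c + d) - c * d * (a + b)) / (a * b - c * d) := by
  rw [eq_div_iff (mul_sub_mul_ne_zero_of_chords hca hcb h₁ h₂)]
  linear_combination a * b * h₂ - c * d * h₁

theorem eq_div_of_chords_right : w = (a + b - (c + d)) / (a * b - c * d) := by
  rw [eq_div_iff (mul_sub_mul_ne_zero_of_chords hca hcb h₁ h₂)]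
  linear_combination h₁ - h₂

end ChordIntersection

theorem pascal_identity {K : Type*} [Field K] {a₁ a₂ a₃ a₄ a₅ a₆ z₁ z₂ z₃ w₁ w₂ w₃ : K}
    (h₄₁ : a₄ ≠ a₁) (h₄₂ : a₄ ≠ a₂) (h₅₂ : a₅ ≠ a₂) (h₅₃ : a₅ ≠ a₃)
    (h₆₃ : a₆ ≠ a₃) (h₆₄ : a₆ ≠ a₄)
    (e₁ : z₁ + a₁ * a₂ * w₁ = a₁ + a₂) (e₁' : z₁ + a₄ * a₅ * w₁ = a₄ + a₅)
    (e₂ : z₂ + a₂ * a₃ * w₂ = a₂ + a₃) (e₂' : z₂ + a₅ * a₆ * w₂ = a₅ + a₆)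
    (e₃ : z₃ + a₃ * a₄ * w₃ = a₃ + a₄) (e₃' : z₃ + a₆ * a₁ * w₃ = a₆ + a₁) :
    (z₂ - z₁) * (w₃ - w₁) = (w₂ - w₁) * (z₃ - z₁) := by
  have d₁ := mul_sub_mul_ne_zero_of_chords h₄₁ h₄₂ e₁ e₁'
  have d₂ := mul_sub_mul_ne_zero_of_chords h₅₂ h₅₃ e₂ e₂'
  have d₃ := mul_sub_mul_ne_zero_of_chords h₆₃ h₆₄ e₃ e₃'
  rw [eq_div_of_chords_left h₄₁ h₄₂ e₁ e₁', eq_div_of_chords_right h₄₁ h₄₂ e₁ e₁',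
    eq_div_of_chords_left h₅₂ h₅₃ e₂ e₂', eq_div_of_chords_right h₅₂ h₅₃ e₂ e₂',
    eq_div_of_chords_left h₆₃ h₆₄ e₃ e₃', eq_div_of_chords_right h₆₃ h₆₄ e₃ e₃',
    div_sub_div _ _ d₂ d₁, div_sub_div _ _ d₃ d₁, div_sub_div _ _ d₂ d₁, div_sub_div _ _ d₃ d₁,
    div_mul_div_comm, div_mul_div_comm]
  congr 1
  ring

namespace Complex

theorem collinear_of_mul_conj_eq {u v w : ℂ}
    (h : (v - u) * conj (w - u) = conj (v - u) * (w - u)) :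
    Collinear ℝ ({u, v, w} : Set ℂ) := by
  rcases eq_or_ne w u with rfl | hwu
  · simpa [Set.pair_comm] using collinear_pair ℝ w v
  have hwu' : w - u ≠ 0 := sub_ne_zero.2 hwu
  set s := (v - u) / (w - u)
  have hs : conj s = s := by
    rw [map_div₀, div_eq_div_iff ((map_ne_zero conj).2 hwu') hwu']
    linear_combination -h
  have hv : v = AffineMap.lineMap u w s.re := by
    rw [AffineMap.lineMap_apply_module', real_smul, conj_eq_iff_re.1 hs,
      div_mul_cancel₀ _ hwu', sub_add_cancel]
  rw [Set.insert_comm]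
  exact collinear_insert_of_mem_affineSpan_pair (hv ▸ AffineMap.lineMap_mem_affineSpan_pair _ _ _)

theorem add_mul_conj_eq_of_mem_affineSpan_pair {a b z : ℂ} (ha : ‖a‖ = 1) (hb : ‖b‖ = 1)
    (hz : z ∈ line[ℝ, a, b]) : z + a * b * conj z = a + b := by
  have ha' : a * conj a = 1 := by simp [mul_conj', ha]
  have hb' : b * conj b = 1 := by simp [mul_conj', hb]
  obtain ⟨t, rfl⟩ := mem_affineSpan_pair_iff_exists_lineMap_eq.1 hz
  rw [AffineMap.lineMap_apply_module', real_smul]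
  simp only [map_add, map_mul, map_sub, conj_ofReal]
  linear_combination (b - t * b) * ha' + (t * a) * hb'

theorem collinear_of_pascal {a₁ a₂ a₃ a₄ a₅ a₆ p₁ p₂ p₃ : ℂ}
    (ha₁ : ‖a₁‖ = 1) (ha₂ : ‖a₂‖ = 1) (ha₃ : ‖a₃‖ = 1)
    (ha₄ : ‖a₄‖ = 1) (ha₅ : ‖a₅‖ = 1) (ha₆ : ‖a₆‖ = 1)
    (h₄₁ : a₄ ≠ a₁) (h₄₂ : a₄ ≠ a₂) (h₅₂ : a₅ ≠ a₂) (h₅₃ : a₅ ≠ a₃)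
    (h₆₃ : a₆ ≠ a₃) (h₆₄ : a₆ ≠ a₄)
    (hp₁ : p₁ ∈ line[ℝ, a₁, a₂]) (hp₁' : p₁ ∈ line[ℝ, a₄, a₅])
    (hp₂ : p₂ ∈ line[ℝ, a₂, a₃]) (hp₂' : p₂ ∈ line[ℝ, a₅, a₆])
    (hp₃ : p₃ ∈ line[ℝ, a₃, a₄]) (hp₃' : p₃ ∈ line[ℝ, a₆, a₁]) :
    Collinear ℝ ({p₁, p₂, p₃} : Set ℂ) := by
  apply collinear_of_mul_conj_eq
  simpa only [map_sub] using pascal_identity h₄₁ h₄₂ h₅₂ h₅₃ h₆₃ h₆₄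
    (add_mul_conj_eq_of_mem_affineSpan_pair ha₁ ha₂ hp₁)
    (add_mul_conj_eq_of_mem_affineSpan_pair ha₄ ha₅ hp₁')
    (add_mul_conj_eq_of_mem_affineSpan_pair ha₂ ha₃ hp₂)
    (add_mul_conj_eq_of_mem_affineSpan_pair ha₅ ha₆ hp₂')
    (add_mul_conj_eq_of_mem_affineSpan_pair ha₃ ha₄ hp₃)
    (add_mul_conj_eq_of_mem_affineSpan_pair ha₆ ha₁ hp₃')

end Complex

/-- **Pascal's theorem for a circle.**
If six distinct points `A₁, …, A₆` lie on a circle and the three pairs of opposite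
sides of the hexagon `A₁A₂A₃A₄A₅A₆` meet in single points `P₁`, `P₂`, `P₃`
respectively, then `P₁`, `P₂`, `P₃` are collinear. -/
theorem pascal_theorem_circle
    (A₁ A₂ A₃ A₄ A₅ A₆ P₁ P₂ P₃ O : EuclideanSpace ℝ (Fin 2)) (r : ℝ) (hr : 0 < r)
    (hdist : [A₁, A₂, A₃, A₄, A₅, A₆].Pairwise (· ≠ ·))
    (h₁ : dist A₁ O = r) (h₂ : dist A₂ O = r) (h₃ : dist A₃ O = r)
    (h₄ : dist A₄ O = r) (h₅ : dist A₅ O = r) (h₆ : dist A₆ O = r)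
    (hP₁ : (affineSpan ℝ {A₁, A₂} : Set (EuclideanSpace ℝ (Fin 2))) ∩
      (affineSpan ℝ {A₄, A₅} : Set (EuclideanSpace ℝ (Fin 2))) = {P₁})
    (hP₂ : (affineSpan ℝ {A₂, A₃} : Set (EuclideanSpace ℝ (Fin 2))) ∩
      (affineSpan ℝ {A₅, A₆} : Set (EuclideanSpace ℝ (Fin 2))) = {P₂})
    (hP₃ : (affineSpan ℝ {A₃, A₄} : Set (EuclideanSpace ℝ (Fin 2))) ∩
      (affineSpan ℝ {A₆, A₁} : Set (EuclideanSpace ℝ (Fin 2))) = {P₃}) :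
    Collinear ℝ {P₁, P₂, P₃} := by
  obtain ⟨f, hf, hfO⟩ :=
    exists_injective_affineMap_complex_norm_eq_one (finrank_euclideanSpace_fin (𝕜 := ℝ)) O hr
  simp only [List.pairwise_cons, List.mem_cons, List.not_mem_nil, forall_eq_or_imp] at hdist
  obtain ⟨⟨-, -, h₁₄, -⟩, ⟨-, h₂₄, h₂₅, -⟩, ⟨-, h₃₅, h₃₆, -⟩, ⟨-, h₄₆, -⟩, -⟩ := hdist
  have hfne : ∀ {A B}, A ≠ B → f B ≠ f A := fun h => hf.ne (Ne.symm h)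
  have hP₁' := hP₁.ge rfl
  have hP₂' := hP₂.ge rfl
  have hP₃' := hP₃.ge rfl
  rw [← f.collinear_map_iff hf]
  exact Complex.collinear_of_pascal (hfO _ h₁) (hfO _ h₂) (hfO _ h₃) (hfO _ h₄) (hfO _ h₅)
    (hfO _ h₆) (hfne h₁₄) (hfne h₂₄) (hfne h₂₅) (hfne h₃₅) (hfne h₃₆) (hfne h₄₆)
    (f.mem_affineSpan_pair_map hP₁'.1) (f.mem_affineSpan_pair_map hP₁'.2)
    (f.mem_affineSpan_pair_map hP₂'.1) (f.mem_affineSpan_pair_map hP₂'.2)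
    (f.mem_affineSpan_pair_map hP₃'.1) (f.mem_affineSpan_pair_map hP₃'.2)
end

section
/- Let c₁ and c₂ be two circles in the Euclidean plane ℝ² intersecting in two distinct points X and Y. Let a line through X meet c₁ again in a point A with A ≠ X and meet c₂ again in a point A' with A' ≠ X (so X, A, A' are collinear), and let a line through Y meet c₁ again in a point B with B ≠ Y and meet c₂ again in a point B' with B' ≠ Y (so Y, B, B' are collinear). Assume A ≠ B and A' ≠ B'. Then the line AB is parallel to the line A'B'. -/
/-!
Work with oriented angles modulo `π`. By the inscribed angle theorem, `∡ B A X = ∡ B Y X` on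
the first circle and `∡ B' A' X = ∡ B' Y X` on the second; since `Y`, `B`, `B'` lie on one line,
the right-hand sides agree, so `∡ B A X = ∡ B' A' X`. As `AX` and `A'X` are the same line, the
lines `AB` and `A'B'` make the same angle with it, hence are parallel.
-/

open EuclideanGeometry Module Affine

theorem Collinear.vectorSpan_pair_eq_of_ne {k V P : Type*} [DivisionRing k] [AddCommGroup V]
    [Module k V] [AddTorsor V P] {p₁ p₂ p₃ : P} (h : Collinear k ({p₁, p₂, p₃} : Set P))
    (hp₂ : p₂ ≠ p₁) (hp₃ : p₃ ≠ p₁) :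
    vectorSpan k ({p₁, p₂} : Set P) = vectorSpan k ({p₁, p₃} : Set P) := by
  rw [← direction_affineSpan, ← direction_affineSpan,
    h.affineSpan_eq_of_ne (by simp) (by simp) hp₂.symm,
    h.affineSpan_eq_of_ne (by simp) (by simp) hp₃.symm]

namespace Orientation

variable {V : Type*} [NormedAddCommGroup V] [InnerProductSpace ℝ V] [Fact (finrank ℝ V = 2)]
  (o : Orientation ℝ V (Fin 2))

theorem span_singleton_eq_of_two_zsmul_oangle_eq_zero {x y : V} (hx : x ≠ 0) (hy : y ≠ 0)
    (h : (2 : ℤ) • o.oangle x y = 0) : ℝ ∙ x = ℝ ∙ y := by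
  obtain ⟨r, rfl⟩ := (o.oangle_eq_zero_or_eq_pi_iff_right_eq_smul.1
    (Real.Angle.two_zsmul_eq_zero_iff.1 h)).resolve_left hx
  have hr : r ≠ 0 := by rintro rfl; simp at hy
  exact (Submodule.span_singleton_smul_eq (IsUnit.mk0 r hr) x).symm

theorem span_singleton_eq_of_two_zsmul_oangle_eq {w x y z : V} (hw : w ≠ 0) (hx : x ≠ 0)
    (hy : y ≠ 0) (hyz : ℝ ∙ y = ℝ ∙ z) (h : (2 : ℤ) • o.oangle w y = (2 : ℤ) • o.oangle x z) :
    ℝ ∙ w = ℝ ∙ x := by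
  refine o.span_singleton_eq_of_two_zsmul_oangle_eq_zero hw hx ?_
  calc (2 : ℤ) • o.oangle w x = (2 : ℤ) • o.oangle w y - (2 : ℤ) • o.oangle x y := by
        rw [← smul_sub, o.oangle_sub_right hw hx hy]
    _ = 0 := by rw [h, o.two_zsmul_oangle_right_of_span_eq x hyz, sub_self]

end Orientation

namespace EuclideanGeometry

variable {V P : Type*} [NormedAddCommGroup V] [InnerProductSpace ℝ V] [MetricSpace P]
  [NormedAddTorsor V P] [Fact (finrank ℝ V = 2)]

theorem vectorSpan_pair_eq_of_two_zsmul_oangle_eq [Module.Oriented ℝ V (Fin 2)]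
    {p₁ p₂ p₃ p₄ p₅ p₆ : P} (hp₁ : p₁ ≠ p₂) (hp₃ : p₃ ≠ p₂) (hp₄ : p₄ ≠ p₅)
    (h₃₂₆₅ : vectorSpan ℝ ({p₃, p₂} : Set P) = vectorSpan ℝ ({p₆, p₅} : Set P))
    (h : (2 : ℤ) • ∡ p₁ p₂ p₃ = (2 : ℤ) • ∡ p₄ p₅ p₆) :
    vectorSpan ℝ ({p₁, p₂} : Set P) = vectorSpan ℝ ({p₄, p₅} : Set P) := by
  simp_rw [vectorSpan_pair] at h₃₂₆₅ ⊢
  exact positiveOrientation.span_singleton_eq_of_two_zsmul_oangle_eq (vsub_ne_zero.2 hp₁)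
    (vsub_ne_zero.2 hp₄) (vsub_ne_zero.2 hp₃) h₃₂₆₅ h

theorem Sphere.affineSpan_pair_parallel_of_collinear {s₁ s₂ : Sphere P} {X Y A A' B B' : P}
    (hXY : X ≠ Y) (hX₁ : X ∈ s₁) (hX₂ : X ∈ s₂) (hY₁ : Y ∈ s₁) (hY₂ : Y ∈ s₂)
    (hA : A ∈ s₁) (hA' : A' ∈ s₂) (hAX : A ≠ X) (hA'X : A' ≠ X)
    (hlineA : Collinear ℝ ({X, A, A'} : Set P))
    (hB : B ∈ s₁) (hB' : B' ∈ s₂) (hBY : B ≠ Y) (hB'Y : B' ≠ Y)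
    (hlineB : Collinear ℝ ({Y, B, B'} : Set P)) (hAB : A ≠ B) (hA'B' : A' ≠ B') :
    line[ℝ, A, B] ∥ line[ℝ, A', B'] := by
  have : FiniteDimensional ℝ V := .of_fact_finrank_eq_two
  have : Module.Oriented ℝ V (Fin 2) := ⟨(finBasisOfFinrankEq ℝ V Fact.out).orientation⟩
  have hangle : (2 : ℤ) • ∡ B A X = (2 : ℤ) • ∡ B' A' X := by
    rw [Sphere.two_zsmul_oangle_eq hB hA hY₁ hX₁ hAB hAX hBY.symm hXY.symm,
      Sphere.two_zsmul_oangle_eq hB' hA' hY₂ hX₂ hA'B' hA'X hB'Y.symm hXY.symm]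
    exact (Set.insert_comm Y B _ ▸ hlineB).two_zsmul_oangle_eq_left hBY hB'Y
  rw [AffineSubspace.affineSpan_pair_parallel_iff_vectorSpan_eq, Set.pair_comm A,
    Set.pair_comm A']
  exact vectorSpan_pair_eq_of_two_zsmul_oangle_eq hAB.symm hAX.symm hA'B'.symm
    (hlineA.vectorSpan_pair_eq_of_ne hAX hA'X) hangle

end EuclideanGeometry

theorem reim_theorem_general
    (O₁ O₂ : EuclideanSpace ℝ (Fin 2)) (r₁ r₂ : ℝ)
    (X Y A A' B B' : EuclideanSpace ℝ (Fin 2)) (hXY : X ≠ Y)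
    (hX₁ : dist X O₁ = r₁) (hX₂ : dist X O₂ = r₂)
    (hY₁ : dist Y O₁ = r₁) (hY₂ : dist Y O₂ = r₂)
    (hA : dist A O₁ = r₁) (hA' : dist A' O₂ = r₂)
    (hAX : A ≠ X) (hA'X : A' ≠ X) (hlineA : Collinear ℝ {X, A, A'})
    (hB : dist B O₁ = r₁) (hB' : dist B' O₂ = r₂)
    (hBY : B ≠ Y) (hB'Y : B' ≠ Y) (hlineB : Collinear ℝ {Y, B, B'})
    (hAB : A ≠ B) (hA'B' : A' ≠ B') :
    (affineSpan ℝ {A, B}).direction = (affineSpan ℝ {A', B'}).direction := by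
  have : Fact (finrank ℝ (EuclideanSpace ℝ (Fin 2)) = 2) := ⟨finrank_euclideanSpace_fin⟩
  exact (Sphere.affineSpan_pair_parallel_of_collinear (s₁ := ⟨O₁, r₁⟩) (s₂ := ⟨O₂, r₂⟩)
    hXY hX₁ hX₂ hY₁ hY₂ hA hA' hAX hA'X hlineA hB hB' hBY hB'Y hlineB hAB hA'B').direction_eq

/-- **Reim's theorem.**
Let two circles meet in two distinct points `X` and `Y`.  A line through `X` meets the
first circle again in `A` and the second again in `A'`; a line through `Y` meets the
first circle again in `B` and the second again in `B'`.  Then the line `AB` is parallel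
to the line `A'B'` (their direction subspaces coincide). -/
theorem reim_theorem
    (O₁ O₂ : EuclideanSpace ℝ (Fin 2)) (r₁ r₂ : ℝ) (hr₁ : 0 < r₁) (hr₂ : 0 < r₂)
    (X Y A A' B B' : EuclideanSpace ℝ (Fin 2)) (hXY : X ≠ Y)
    (hX₁ : dist X O₁ = r₁) (hX₂ : dist X O₂ = r₂)
    (hY₁ : dist Y O₁ = r₁) (hY₂ : dist Y O₂ = r₂)
    (hA : dist A O₁ = r₁) (hA' : dist A' O₂ = r₂)
    (hAX : A ≠ X) (hA'X : A' ≠ X) (hlineA : Collinear ℝ {X, A, A'})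
    (hB : dist B O₁ = r₁) (hB' : dist B' O₂ = r₂)
    (hBY : B ≠ Y) (hB'Y : B' ≠ Y) (hlineB : Collinear ℝ {Y, B, B'})
    (hAB : A ≠ B) (hA'B' : A' ≠ B') :
    (affineSpan ℝ {A, B}).direction = (affineSpan ℝ {A', B'}).direction :=
  reim_theorem_general O₁ O₂ r₁ r₂ X Y A A' B B' hXY hX₁ hX₂ hY₁ hY₂ hA hA' hAX hA'X hlineA hB hB'
    hBY hB'Y hlineB hAB hA'B'
end

section
/- Let Q₁ and Q₂ be two quadratic forms on ℝ² with Q₁ ≠ Q₂. Then the set {x ∈ ℝ² : Q₁(x) = 1 and Q₂(x) = 1} has at most four elements. That is, two distinct central conics with the same center have at most four points in common. -/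
/-!
A common point of the two conics is a zero of the nonzero quadratic form `Q₁ - Q₂`. The zeros
of a nonzero quadratic form on a plane lie on at most two lines through the origin, and each
line through the origin meets the conic `Q₁ = 1` in at most two opposite points.
-/

open Module Submodule

namespace QuadraticMap

section CommRing

variable {R M : Type*} [CommRing R] [AddCommGroup M] [Module R M]

theorem map_smul_add_smul (Q : QuadraticForm R M) (a b : R) (u v : M) :
    Q (a • u + b • v) = a ^ 2 * Q u + b ^ 2 * Q v + a * b * polar Q u v := by
  rw [QuadraticMap.map_add ⇑Q, Q.map_smul, Q.map_smul, polar_smul_left, polar_smul_right]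
  simp only [smul_eq_mul]
  ring

theorem exists_eq_or_eq_neg_of_mem_span_singleton [NoZeroDivisors R] (Q : QuadraticForm R M)
    {c : R} (hc : c ≠ 0) (v : M) : ∃ u, ∀ x ∈ R ∙ v, Q x = c → x = u ∨ x = -u := by
  by_cases h : ∃ x ∈ R ∙ v, Q x = c
  · obtain ⟨x₀, hx₀, hQx₀⟩ := h
    refine ⟨x₀, fun x hx hQx => ?_⟩
    obtain ⟨s, rfl⟩ := mem_span_singleton.mp hx₀
    obtain ⟨t, rfl⟩ := mem_span_singleton.mp hx
    rw [Q.map_smul, smul_eq_mul] at hQx₀ hQx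
    have hQv : Q v ≠ 0 := by
      rintro hQv
      rw [hQv, mul_zero] at hQx
      exact hc hQx.symm
    have hts : t * t = s * s := mul_right_cancel₀ hQv (hQx.trans hQx₀.symm)
    rcases mul_self_eq_mul_self_iff.mp hts with rfl | rfl
    · exact Or.inl rfl
    · exact Or.inr (neg_smul _ _)
  · push Not at h
    exact ⟨0, fun x hx hQx => absurd hQx (h x hx)⟩

end CommRing

section Field

variable {K V : Type*} [Field K] [AddCommGroup V] [Module K V]

/-- Writing `w = a • u + b • v`, the hypotheses force `a b ≠ 0` and `Q w = a b · polar Q u v`,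
so the polar form vanishes at `(u, v)` as well, and `Q` vanishes on `span {u, v} = V`. -/
theorem eq_zero_of_isotropic_triple (hV : finrank K V = 2) {Q : QuadraticForm K V} {u v w : V}
    (huv : LinearIndependent K ![u, v]) (hwu : w ∉ K ∙ u) (hwv : w ∉ K ∙ v)
    (hu : Q u = 0) (hv : Q v = 0) (hw : Q w = 0) : Q = 0 := by
  have hspan : span K {u, v} = ⊤ := by
    simpa [Set.pair_comm] using huv.span_eq_top_of_card_eq_finrank (by simp [hV])
  obtain ⟨a, b, rfl⟩ := mem_span_pair.mp (hspan ▸ mem_top : w ∈ span K {u, v})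
  have ha : a ≠ 0 := by
    rintro rfl
    exact hwv (by simpa using smul_mem _ b (mem_span_singleton_self v))
  have hb : b ≠ 0 := by
    rintro rfl
    exact hwu (by simpa using smul_mem _ a (mem_span_singleton_self u))
  have hpolar : polar Q u v = 0 := by
    rw [map_smul_add_smul, hu, hv] at hw
    simpa [ha, hb] using hw
  ext x
  obtain ⟨c, d, rfl⟩ := mem_span_pair.mp (hspan ▸ mem_top : x ∈ span K {u, v})
  simp [map_smul_add_smul, hu, hv, hpolar]

theorem exists_isotropic_subset_two_lines (hV : finrank K V = 2) {Q : QuadraticForm K V}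
    (hQ : Q ≠ 0) : ∃ u v : V, ∀ x, Q x = 0 → x ∈ K ∙ u ∨ x ∈ K ∙ v := by
  by_contra! h
  obtain ⟨u, hu, hu0, -⟩ := h 0 0
  obtain ⟨v, hv, hvu, -⟩ := h u u
  obtain ⟨w, hw, hwu, hwv⟩ := h u v
  have hindep : LinearIndependent K ![v, u] := by
    refine linearIndependent_fin2.mpr ⟨by simpa using hu0, fun a hau => hvu ?_⟩
    simp only [Matrix.cons_val_one, Matrix.cons_val_zero] at hau
    exact hau ▸ smul_mem _ a (mem_span_singleton_self u)
  exact hQ (eq_zero_of_isotropic_triple hV hindep hwv hwu hv hu hw)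

end Field

end QuadraticMap

/-- **Two distinct central conics with a common center meet in at most four points.**
If `Q₁ ≠ Q₂` are quadratic forms on `ℝ²`, then the set of common solutions of
`Q₁ x = 1` and `Q₂ x = 1` has at most four elements. -/
theorem central_conics_at_most_four_common_points
    (Q₁ Q₂ : QuadraticForm ℝ (ℝ × ℝ)) (h : Q₁ ≠ Q₂) :
    ∃ S : Finset (ℝ × ℝ), S.card ≤ 4 ∧
      {x : ℝ × ℝ | Q₁ x = 1 ∧ Q₂ x = 1} ⊆ ↑S := by
  obtain ⟨v, w, hvw⟩ :=
    QuadraticMap.exists_isotropic_subset_two_lines (by simp) (sub_ne_zero.mpr h)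
  obtain ⟨u₁, hu₁⟩ := Q₁.exists_eq_or_eq_neg_of_mem_span_singleton one_ne_zero v
  obtain ⟨u₂, hu₂⟩ := Q₁.exists_eq_or_eq_neg_of_mem_span_singleton one_ne_zero w
  refine ⟨{u₁, -u₁, u₂, -u₂}, Finset.card_le_four, fun x ⟨hx₁, hx₂⟩ => ?_⟩
  have hx : (Q₁ - Q₂) x = 0 := by simp [hx₁, hx₂]
  rcases hvw x hx with hxv | hxw
  · rcases hu₁ x hxv hx₁ with rfl | rfl <;> simp
  · rcases hu₂ x hxw hx₁ with rfl | rfl <;> simp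
end

section
/- Let A, B, C be three non-collinear points in the Euclidean plane ℝ² and let Γ be their circumcircle. Then there exists a point M ∈ Γ with M ≠ A such that dist(M, B) = dist(M, C) (so M lies on the perpendicular bisector of the segment BC) and the undirected angles satisfy ∠BAM = ∠MAC (so the ray AM bisects the angle at A). In other words, the perpendicular bisector of the side BC and the angle bisector at the opposite vertex A meet on the circumcircle of the triangle. -/
/-!
The perpendicular bisector of `BC` passes through the circumcentre, so it meets the circumcircle
in two antipodal points `M₁`, `M₂`. For such a point `M`, the inscribed angle theorem and the
isosceles triangle `MBC` give `2∡BAM = 2∡BCM = 2∡MBC = 2∡MAC` for oriented angles, so the defect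
`∡MAC - ∡BAM` is `0` or `π`. By Thales' theorem the defects of `M₁` and `M₂` differ by
`2∡M₁AM₂ = π`, so one of them vanishes. If `A` is itself one of the two points, then `AB = AC`
and the other point works by SSS congruence.
-/

open EuclideanGeometry Module AffineSubspace Real

namespace EuclideanGeometry

variable {V P : Type*} [NormedAddCommGroup V] [InnerProductSpace ℝ V] [MetricSpace P]
  [NormedAddTorsor V P]

theorem angle_eq_angle_of_dist_eq_of_dist_eq {A B C M : P} (hA : dist A B = dist A C)
    (hM : dist M B = dist M C) : ∠ B A M = ∠ M A C := by
  rw [angle_comm M A C]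
  exact angle_eq_of_congruent
    (side_side_side (a := B) (b := A) (c := M) (a' := C) (b' := A) (c' := M)
      (by rw [dist_comm, hA, dist_comm]) rfl hM) 0 1 2

theorem Sphere.exists_isDiameter_mem_of_center_mem {s : Sphere P} {L : AffineSubspace ℝ P}
    (hc : s.center ∈ L) (hL : L.direction ≠ ⊥) (hr : 0 ≤ s.radius) :
    ∃ p₁ p₂, s.IsDiameter p₁ p₂ ∧ p₁ ∈ L ∧ p₂ ∈ L := by
  obtain ⟨w, hwL, hw⟩ := Submodule.exists_mem_ne_zero_of_ne_bot hL
  set u := (s.radius / ‖w‖) • w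
  have huL : u ∈ L.direction := L.direction.smul_mem _ hwL
  refine ⟨u +ᵥ s.center, -u +ᵥ s.center,
    Sphere.isDiameter_iff_left_mem_and_pointReflection_center_left.2 ⟨?_, ?_⟩,
    L.vadd_mem_of_mem_direction huL hc, L.vadd_mem_of_mem_direction (neg_mem huL) hc⟩
  · simp [u, mem_sphere, norm_smul, abs_of_nonneg hr, hw]
  · simp [Equiv.pointReflection_apply, vsub_vadd_eq_vsub_sub]

variable [Fact (finrank ℝ V = 2)]

theorem direction_perpBisector_ne_bot {B C : P} (hBC : B ≠ C) :
    (perpBisector B C).direction ≠ ⊥ := by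
  have : FiniteDimensional ℝ V := .of_fact_finrank_eq_two
  rw [direction_perpBisector, Ne, ← Submodule.finrank_eq_zero,
    Submodule.finrank_orthogonal_span_singleton (n := 1) (vsub_ne_zero.2 hBC.symm)]
  exact one_ne_zero

theorem Sphere.exists_isDiameter_mem_perpBisector {s : Sphere P} {B C : P} (hB : B ∈ s)
    (hC : C ∈ s) (hBC : B ≠ C) :
    ∃ M₁ M₂, s.IsDiameter M₁ M₂ ∧ M₁ ∈ perpBisector B C ∧ M₂ ∈ perpBisector B C :=
  Sphere.exists_isDiameter_mem_of_center_mem (mem_perpBisector_iff_dist_eq'.2 (hB.trans hC.symm))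
    (direction_perpBisector_ne_bot hBC) (radius_nonneg_of_mem hB)

section Oriented

variable [Module.Oriented ℝ V (Fin 2)]

theorem Sphere.IsDiameter.two_zsmul_oangle_eq_pi {s : Sphere P} {p₁ p₂ p : P}
    (hd : s.IsDiameter p₁ p₂) (hp : p ∈ s) (hp₁ : p₁ ≠ p) (hp₂ : p₂ ≠ p) :
    (2 : ℤ) • ∡ p₁ p p₂ = π := by
  have hright : ∠ p₁ p p₂ = π / 2 := (Sphere.thales_theorem hd).2 hp
  rcases oangle_eq_angle_or_eq_neg_angle hp₁ hp₂ with h | h <;>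
    rw [h, hright]
  · exact Real.Angle.two_zsmul_coe_div_two _
  · rw [smul_neg, Real.Angle.two_zsmul_coe_div_two, Real.Angle.neg_coe_pi]

theorem Sphere.two_zsmul_oangle_eq_of_dist_eq {s : Sphere P} {A B C M : P}
    (hA : A ∈ s) (hB : B ∈ s) (hC : C ∈ s) (hM : M ∈ s) (hd : dist M B = dist M C)
    (hAB : A ≠ B) (hAC : A ≠ C) (hMA : M ≠ A) (hBC : B ≠ C) :
    (2 : ℤ) • ∡ B A M = (2 : ℤ) • ∡ M A C := by
  have hMB : M ≠ B := by rintro rfl; exact hBC (by simpa using hd)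
  have hMC : M ≠ C := by rintro rfl; exact hBC.symm (by simpa using hd)
  calc (2 : ℤ) • ∡ B A M = (2 : ℤ) • ∡ B C M :=
        Sphere.two_zsmul_oangle_eq hB hA hC hM hAB hMA.symm hBC.symm hMC.symm
    _ = (2 : ℤ) • ∡ M B C := by rw [oangle_eq_oangle_of_dist_eq hd]
    _ = (2 : ℤ) • ∡ M A C :=
        Sphere.two_zsmul_oangle_eq hM hB hA hC hMB.symm hBC hMA.symm hAC

theorem Sphere.IsDiameter.oangle_eq_or_oangle_eq {s : Sphere P} {A B C M₁ M₂ : P}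
    (hd : s.IsDiameter M₁ M₂) (hA : A ∈ s) (hB : B ∈ s) (hC : C ∈ s)
    (hAB : A ≠ B) (hAC : A ≠ C) (hBC : B ≠ C) (hM₁A : M₁ ≠ A) (hM₂A : M₂ ≠ A)
    (hM₁ : dist M₁ B = dist M₁ C) :
    ∡ B A M₁ = ∡ M₁ A C ∨ ∡ B A M₂ = ∡ M₂ A C := by
  have h₁ : (2 : ℤ) • (∡ M₁ A C - ∡ B A M₁) = 0 := by
    rw [smul_sub, Sphere.two_zsmul_oangle_eq_of_dist_eq hA hB hC hd.left_mem hM₁ hAB hAC hM₁A hBC,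
      sub_self]
  have h₁₂ : (∡ M₁ A C - ∡ B A M₁) - (∡ M₂ A C - ∡ B A M₂) = π := by
    calc _ = (2 : ℤ) • ∡ M₁ A M₂ := by
          rw [two_zsmul, ← oangle_add hM₁A hM₂A hAC.symm, ← oangle_add hAB.symm hM₁A hM₂A]
          abel
      _ = π := hd.two_zsmul_oangle_eq_pi hA hM₁A hM₂A
  rcases Real.Angle.two_zsmul_eq_zero_iff.1 h₁ with h | h
  · exact Or.inl (sub_eq_zero.1 h).symm
  · refine Or.inr (sub_eq_zero.1 ?_).symm
    rw [h] at h₁₂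
    exact sub_eq_self.1 h₁₂

end Oriented

theorem Sphere.exists_dist_eq_and_angle_eq {s : Sphere P} {A B C : P} (hA : A ∈ s) (hB : B ∈ s)
    (hC : C ∈ s) (hAB : A ≠ B) (hAC : A ≠ C) (hBC : B ≠ C) :
    ∃ M ∈ s, M ≠ A ∧ dist M B = dist M C ∧ ∠ B A M = ∠ M A C := by
  have : FiniteDimensional ℝ V := .of_fact_finrank_eq_two
  let _ : Module.Oriented ℝ V (Fin 2) := ⟨(finBasisOfFinrankEq ℝ V Fact.out).orientation⟩
  obtain ⟨M₁, M₂, hd, hM₁, hM₂⟩ := Sphere.exists_isDiameter_mem_perpBisector hB hC hBC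
  rw [mem_perpBisector_iff_dist_eq] at hM₁ hM₂
  have hr : s.radius ≠ 0 := fun h ↦
    hAB ((dist_eq_zero.1 (hA.trans h)).trans (dist_eq_zero.1 (hB.trans h)).symm)
  wlog hM₁A : M₁ ≠ A generalizing M₁ M₂
  · refine this M₂ M₁ hd.symm hM₂ hM₁ ?_
    rw [← not_not.1 hM₁A]
    exact (hd.left_ne_right_iff_radius_ne_zero.2 hr).symm
  by_cases hM₂A : M₂ = A
  · subst hM₂A
    exact ⟨M₁, hd.left_mem, hM₁A, hM₁, angle_eq_angle_of_dist_eq_of_dist_eq hM₂ hM₁⟩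
  have hangle {M : P} (hMA : M ≠ A) (h : ∡ B A M = ∡ M A C) : ∠ B A M = ∠ M A C := by
    rw [angle_eq_abs_oangle_toReal hAB.symm hMA, angle_eq_abs_oangle_toReal hMA hAC.symm, h]
  rcases hd.oangle_eq_or_oangle_eq hA hB hC hAB hAC hBC hM₁A hM₂A hM₁ with h | h
  · exact ⟨M₁, hd.left_mem, hM₁A, hM₁, hangle hM₁A h⟩
  · exact ⟨M₂, hd.right_mem, hM₂A, hM₂, hangle hM₂A h⟩

end EuclideanGeometry

/-- **The perpendicular bisector of a side and the bisector of the opposite angle meet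
on the circumcircle.**
Let `A`, `B`, `C` be non-collinear points on the circle with center `O` and radius `r`.
Then there is a point `M ≠ A` on this circle which is equidistant from `B` and `C`
(it lies on the perpendicular bisector of `BC`) and satisfies `∠ B A M = ∠ M A C`
(the ray `AM` bisects the angle at `A`). -/
theorem perp_bisector_angle_bisector_meet_on_circumcircle
    (A B C O : EuclideanSpace ℝ (Fin 2)) (r : ℝ)
    (hncol : ¬ Collinear ℝ ({A, B, C} : Set (EuclideanSpace ℝ (Fin 2))))
    (hA : dist A O = r) (hB : dist B O = r) (hC : dist C O = r) :
    ∃ M : EuclideanSpace ℝ (Fin 2), dist M O = r ∧ M ≠ A ∧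
      dist M B = dist M C ∧ ∠ B A M = ∠ M A C := by
  have : Fact (finrank ℝ (EuclideanSpace ℝ (Fin 2)) = 2) := ⟨finrank_euclideanSpace_fin⟩
  exact Sphere.exists_dist_eq_and_angle_eq (s := ⟨O, r⟩) hA hB hC (ne₁₂_of_not_collinear hncol)
    (ne₁₃_of_not_collinear hncol) (ne₂₃_of_not_collinear hncol)
end

section
/- Let P₁, P₂, P₃, P₄, P₅ be five distinct points of ℝ² such that no three of them are collinear. Then there exists a nonzero real polynomial p(x, y) of total degree at most 2 vanishing at all five points, and p is unique up to a nonzero scalar: if q(x, y) is any nonzero real polynomial of total degree at most 2 vanishing at all five points, then q = λ·p for some nonzero real number λ. That is, five points in general position determine a unique conic. -/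
/-!
Conics form the `6`-dimensional space of polynomials of total degree at most `2` in two
variables, and evaluation at the five points maps it onto `ℝ⁵`: for each point, the product of
the line through two of the other four points and the line through the remaining two is a conic
vanishing at those four points and, since no three points are collinear, not at the chosen one.
By rank–nullity the conics through the five points form a line.
-/

open MvPolynomial Module Finset

namespace MvPolynomial

theorem finrank_restrictTotalDegree {R σ : Type*} [CommRing R] [StrongRankCondition R]
    [Fintype σ] (m : ℕ) :
    finrank R (restrictTotalDegree σ R m) =
      ∑ d ∈ range (m + 1), (Fintype.card σ).multichoose d := by
  classical
  have hsupport : {n : σ →₀ ℕ | (n.sum fun _ e => e) ≤ m} =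
      ((range (m + 1)).biUnion fun d => univ.finsuppAntidiag d : Finset (σ →₀ ℕ)) := by
    ext n
    simp [mem_finsuppAntidiag, Finsupp.sum_fintype]
  rw [restrictTotalDegree, finrank_eq_nat_card_basis (basisRestrictSupport R _), hsupport,
    Nat.card_coe_set_eq, Set.ncard_coe_finset, card_biUnion]
  · simp [card_finsuppAntidiag_nat_eq_multichoose]
  · intro d _ e _ hde
    exact disjoint_left.2 fun n hd he =>
      hde ((mem_finsuppAntidiag.1 hd).1.symm.trans (mem_finsuppAntidiag.1 he).1)

end MvPolynomial

variable {K : Type*} [Field K]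

theorem LinearMap.surjective_of_forall_exists_apply_ne_zero {ι V : Type*} [Finite ι]
    [AddCommGroup V] [Module K V] (f : V →ₗ[K] ι → K)
    (h : ∀ i, ∃ v, f v i ≠ 0 ∧ ∀ j, j ≠ i → f v j = 0) : Function.Surjective f := by
  classical
  rw [← LinearMap.range_eq_top, eq_top_iff, ← (Pi.basisFun K ι).span_eq, Submodule.span_le]
  rintro _ ⟨i, rfl⟩
  obtain ⟨v, hvi, hv⟩ := h i
  refine ⟨(f v i)⁻¹ • v, funext fun j => ?_⟩
  by_cases hji : j = i
  · subst hji
    simp [hvi]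
  · simp [hv j hji, hji]

theorem collinear_of_det_eq_zero {a b c : Fin 2 → K}
    (h : (b 0 - a 0) * (c 1 - a 1) - (b 1 - a 1) * (c 0 - a 0) = 0) :
    Collinear K {a, b, c} := by
  rw [collinear_iff_not_affineIndependent_set, affineIndependent_iff_linearIndependent_vsub K _ 0,
    ← linearIndependent_equiv (finSuccAboveEquiv (0 : Fin 3))]
  have hrows : (fun i : {x : Fin 3 // x ≠ 0} => ![a, b, c] i -ᵥ ![a, b, c] 0) ∘
      finSuccAboveEquiv (0 : Fin 3) = (Matrix.of ![b - a, c - a]).row := by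
    ext i j
    fin_cases i <;> rfl
  rw [hrows, Matrix.linearIndependent_rows_iff_isUnit, Matrix.isUnit_iff_isUnit_det,
    Matrix.det_fin_two, isUnit_iff_ne_zero, not_not]
  simpa using h

/-- `x ↦ det (b - a, x - a)`, an equation of the line through `a` and `b` when `a ≠ b`. -/
noncomputable def linePoly (a b : Fin 2 → K) : MvPolynomial (Fin 2) K :=
  C (b 0 - a 0) * (X 1 - C (a 1)) - C (b 1 - a 1) * (X 0 - C (a 0))

theorem eval_linePoly (a b x : Fin 2 → K) :
    eval x (linePoly a b) = (b 0 - a 0) * (x 1 - a 1) - (b 1 - a 1) * (x 0 - a 0) := by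
  simp [linePoly]

theorem eval_linePoly_left (a b : Fin 2 → K) : eval a (linePoly a b) = 0 := by
  rw [eval_linePoly]; ring

theorem eval_linePoly_right (a b : Fin 2 → K) : eval b (linePoly a b) = 0 := by
  rw [eval_linePoly]; ring

theorem eval_linePoly_ne_zero {a b x : Fin 2 → K} (h : ¬Collinear K {x, a, b}) :
    eval x (linePoly a b) ≠ 0 := by
  rw [Set.insert_comm, Set.pair_comm] at h
  exact fun h0 => h (collinear_of_det_eq_zero ((eval_linePoly a b x).symm.trans h0))

theorem totalDegree_linePoly_le (a b : Fin 2 → K) : (linePoly a b).totalDegree ≤ 1 := by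
  refine (totalDegree_sub _ _).trans (max_le ?_ ?_) <;>
    refine (totalDegree_mul _ _).trans ?_ <;>
    rw [totalDegree_C, zero_add] <;>
    exact (totalDegree_sub _ _).trans (by simp [totalDegree_X])

noncomputable def evalAtPoints {ι σ : Type*} (A : ι → σ → K) :
    MvPolynomial σ K →ₗ[K] ι → K :=
  LinearMap.pi fun i => (aeval (A i)).toLinearMap

theorem mem_ker_evalAtPoints {ι σ : Type*} {A : ι → σ → K} {p : MvPolynomial σ K} :
    p ∈ LinearMap.ker (evalAtPoints A) ↔ ∀ i, eval (A i) p = 0 := by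
  simp [evalAtPoints, funext_iff]

section FivePoints

variable {A : Fin 5 → Fin 2 → K}

theorem exists_conic_vanishing_except
    (hA : ∀ i j k : Fin 5, i ≠ j → i ≠ k → j ≠ k → ¬Collinear K {A i, A j, A k})
    (i : Fin 5) :
    ∃ g : MvPolynomial (Fin 2) K, g.totalDegree ≤ 2 ∧ eval (A i) g ≠ 0 ∧
      ∀ j, j ≠ i → eval (A j) g = 0 := by
  let B : Fin 4 → Fin 2 → K := fun k => A (i.succAbove k)
  have hB : ∀ k l : Fin 4, k ≠ l → ¬Collinear K {A i, B k, B l} := fun k l hkl =>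
    hA _ _ _ (i.succAbove_ne k).symm (i.succAbove_ne l).symm (i.succAbove_right_injective.ne hkl)
  refine ⟨linePoly (B 0) (B 1) * linePoly (B 2) (B 3), ?_, ?_, ?_⟩
  · exact (totalDegree_mul _ _).trans
      (add_le_add (totalDegree_linePoly_le _ _) (totalDegree_linePoly_le _ _))
  · rw [eval_mul]
    exact mul_ne_zero (eval_linePoly_ne_zero (hB 0 1 (by decide)))
      (eval_linePoly_ne_zero (hB 2 3 (by decide)))
  · intro j hj
    obtain ⟨k, rfl⟩ := Fin.exists_succAbove_eq hj
    fin_cases k <;> simp [B, eval_linePoly_left, eval_linePoly_right]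

theorem surjective_evalAtPoints_domRestrict
    (hA : ∀ i j k : Fin 5, i ≠ j → i ≠ k → j ≠ k → ¬Collinear K {A i, A j, A k}) :
    Function.Surjective ((evalAtPoints A).domRestrict (restrictTotalDegree (Fin 2) K 2)) := by
  refine LinearMap.surjective_of_forall_exists_apply_ne_zero _ fun i => ?_
  obtain ⟨g, hg, hgi, hgj⟩ := exists_conic_vanishing_except hA i
  exact ⟨⟨g, (mem_restrictTotalDegree _ _ _).2 hg⟩, by simpa [evalAtPoints] using hgi,
    fun j hj => by simpa [evalAtPoints] using hgj j hj⟩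

theorem finrank_restrictTotalDegree_inf_ker_evalAtPoints
    (hA : ∀ i j k : Fin 5, i ≠ j → i ≠ k → j ≠ k → ¬Collinear K {A i, A j, A k}) :
    finrank K ↥(restrictTotalDegree (Fin 2) K 2 ⊓ LinearMap.ker (evalAtPoints A)) = 1 := by
  set S := restrictTotalDegree (Fin 2) K 2
  have h := ((evalAtPoints A).domRestrict S).finrank_range_add_finrank_ker
  rw [LinearMap.range_eq_top.2 (surjective_evalAtPoints_domRestrict hA), finrank_top,
    finrank_fin_fun, finrank_restrictTotalDegree, LinearMap.ker_domRestrict] at h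
  have hcomap : (LinearMap.ker (evalAtPoints A)).comap S.subtype =
      (S ⊓ LinearMap.ker (evalAtPoints A)).comap S.subtype := by
    rw [Submodule.comap_inf, Submodule.comap_subtype_self, top_inf_eq]
  rw [hcomap, (Submodule.comapSubtypeEquivOfLe inf_le_left).finrank_eq] at h
  simp [sum_range_succ] at h
  omega

end FivePoints

theorem five_points_determine_unique_conic_general
    (A : Fin 5 → (Fin 2 → ℝ))
    (hncol : ∀ i j k : Fin 5, i ≠ j → i ≠ k → j ≠ k → ¬ Collinear ℝ {A i, A j, A k}) :
    ∃ p : MvPolynomial (Fin 2) ℝ, p ≠ 0 ∧ p.totalDegree ≤ 2 ∧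
      (∀ i, MvPolynomial.eval (A i) p = 0) ∧
      ∀ q : MvPolynomial (Fin 2) ℝ, q ≠ 0 → q.totalDegree ≤ 2 →
        (∀ i, MvPolynomial.eval (A i) q = 0) → ∃ l : ℝ, l ≠ 0 ∧ q = l • p := by
  obtain ⟨⟨p, hp2, hpA⟩, hp0, hp⟩ :=
    finrank_eq_one_iff'.mp (finrank_restrictTotalDegree_inf_ker_evalAtPoints hncol)
  refine ⟨p, fun h => hp0 (by simp [h]), (mem_restrictTotalDegree _ _ _).1 hp2,
    mem_ker_evalAtPoints.1 hpA, fun q hq0 hq hqA => ?_⟩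
  obtain ⟨l, hl⟩ := hp ⟨q, (mem_restrictTotalDegree _ _ _).2 hq, mem_ker_evalAtPoints.2 hqA⟩
  have hlq : l • p = q := congrArg Subtype.val hl
  exact ⟨l, fun hl0 => hq0 (by simp [← hlq, hl0]), hlq.symm⟩

/-- **Five points in general position determine a unique conic.**
Let `A 0, …, A 4` be five distinct points of the plane, no three collinear.  Then
there is a nonzero real polynomial `p` of total degree at most `2` in two variables
vanishing at all five points, and it is unique up to a nonzero scalar: any nonzero
polynomial `q` of total degree at most `2` vanishing at the five points equals
`l • p` for some nonzero real `l`. -/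
theorem five_points_determine_unique_conic
    (A : Fin 5 → (Fin 2 → ℝ)) (hinj : Function.Injective A)
    (hncol : ∀ i j k : Fin 5, i ≠ j → i ≠ k → j ≠ k → ¬ Collinear ℝ {A i, A j, A k}) :
    ∃ p : MvPolynomial (Fin 2) ℝ, p ≠ 0 ∧ p.totalDegree ≤ 2 ∧
      (∀ i, MvPolynomial.eval (A i) p = 0) ∧
      ∀ q : MvPolynomial (Fin 2) ℝ, q ≠ 0 → q.totalDegree ≤ 2 →
        (∀ i, MvPolynomial.eval (A i) q = 0) → ∃ l : ℝ, l ≠ 0 ∧ q = l • p :=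
  five_points_determine_unique_conic_general A hncol
end
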